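/- arXiv:1304.7840 — 3 statements merged into one kernel-verified Lean document; each statement's English description precedes it below -/
import Mathlib

section
/- Let Φ be a crystallographic root system with base Δ, Weyl group W, and let 𝔥 ⊆ Φ⁺ be a Hessenberg set (the complement of an ideal of Φ⁺ in the root order). The GKM ring H_T*(𝔥) = { P : W → ℝ[Δ] : P(w) − P(s_α w) ∈ ⟨α⟩ for every edge w → s_α w of Γ_𝔥 } is stable under the dot action of W defined by (w · P)(u) = w(P(w⁻¹u)). -/
open scoped RealInnerProductSpace Pointwise

noncomputable section

/-- Euclidean `n`-space, the ambient space of the root system. -/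
abbrev EV (n : ℕ) := EuclideanSpace ℝ (Fin n)

/-- The (orthogonal) reflection in the hyperplane orthogonal to `α`. -/
def sRefl {n : ℕ} (α : EV n) : EV n ≃ₗᵢ[ℝ] EV n :=
  Submodule.reflection ((ℝ ∙ α)ᗮ)

/-- A finite crystallographic root system in `ℝⁿ`, together with a choice of
positive roots and a base of simple roots. -/
structure BasedRootSystem (n : ℕ) where
  /-- the set of roots -/
  Φ : Set (EV n)
  /-- the positive roots -/
  pos : Set (EV n)
  /-- the base of simple roots -/
  Δ : Set (EV n)
  finite : Φ.Finite
  nonzero : ∀ α ∈ Φ, α ≠ 0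
  reduced : ∀ α ∈ Φ, ∀ c : ℝ, c • α ∈ Φ → c = 1 ∨ c = -1
  reflect_mem : ∀ α ∈ Φ, ∀ β ∈ Φ, sRefl α β ∈ Φ
  cartan_int : ∀ α ∈ Φ, ∀ β ∈ Φ, ∃ m : ℤ, (m : ℝ) = 2 * ⟪α, β⟫ / ⟪α, α⟫
  pos_sub : pos ⊆ Φ
  pos_union : Φ = pos ∪ (-pos)
  pos_disj : pos ∩ (-pos) = ∅
  Δ_sub : Δ ⊆ pos
  Δ_indep : LinearIndependent ℝ ((↑) : Δ → EV n)
  Δ_span : Submodule.span ℝ Δ = ⊤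
  pos_combo : ∀ α ∈ pos, α ∈ AddSubmonoid.closure Δ

namespace BasedRootSystem

variable {n : ℕ} (R : BasedRootSystem n)

/-- The root order: `α ≺ β` iff `β - α` is a nonempty sum of positive roots. -/
def prec (a b : EV n) : Prop :=
  a ≠ b ∧ b - a ∈ AddSubmonoid.closure R.pos

/-- An ideal of the positive roots: upward closed for the root order. -/
def IsIdeal (I : Set (EV n)) : Prop :=
  I ⊆ R.pos ∧ ∀ β ∈ I, ∀ α ∈ R.pos, R.prec β α → α ∈ I

/-- A Hessenberg set: the complement in `Φ⁺` of an ideal. -/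
def IsHess (h : Set (EV n)) : Prop :=
  h ⊆ R.pos ∧ R.IsIdeal (R.pos \ h)

/-- The Weyl group, generated by the reflections in the roots. -/
def Weyl : Subgroup (EV n ≃ₗᵢ[ℝ] EV n) :=
  Subgroup.closure {g | ∃ α ∈ R.Φ, g = sRefl α}

/-- Application of a Weyl group element to a vector. -/
def ap (w : R.Weyl) (x : EV n) : EV n := (w : EV n ≃ₗᵢ[ℝ] EV n) x

/-- The inversion set `N_w = {α ∈ Φ⁺ : w⁻¹ α ∈ Φ⁻}`. -/
def N (w : R.Weyl) : Set (EV n) := {α | α ∈ R.pos ∧ R.ap w⁻¹ α ∈ -R.pos}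

/-- The length of a Weyl group element, `ℓ(w) = |N_w|`. -/
def len (w : R.Weyl) : ℕ := (R.N w).ncard

/-- The `𝔥`-inversion set `N_w^𝔥 = {α ∈ Φ⁺ : w⁻¹ α ∈ -𝔥}`. -/
def Nh (h : Set (EV n)) (w : R.Weyl) : Set (EV n) :=
  {α | α ∈ R.pos ∧ R.ap w⁻¹ α ∈ -h}

/-- `ℓ_𝔥(w) = |N_w^𝔥|`, the number of Hessenberg edges ending at `w`. -/
def lenh (h : Set (EV n)) (w : R.Weyl) : ℕ := (R.Nh h w).ncard

/-- `v` covers `w` in Bruhat order: `v = s_α w` with `ℓ(v) = ℓ(w) + 1`. -/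
def Covers (v w : R.Weyl) : Prop :=
  ∃ α ∈ R.pos, (v : EV n ≃ₗᵢ[ℝ] EV n) = sRefl α * (w : EV n ≃ₗᵢ[ℝ] EV n) ∧
    R.len v = R.len w + 1

/-- Bruhat order: the transitive closure of the relations `w < s_α w`
whenever the length increases. -/
def bruhatLt (w v : R.Weyl) : Prop :=
  Relation.TransGen (fun u u' : R.Weyl =>
    ∃ α ∈ R.pos, (u' : EV n ≃ₗᵢ[ℝ] EV n) = sRefl α * (u : EV n ≃ₗᵢ[ℝ] EV n) ∧
      R.len u < R.len u') w v

/-- The edge relation of the Hessenberg graph `Γ_𝔥`: `u → w` when `w = s_α u`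
with `α ∈ Φ⁺` and `w⁻¹ α ∈ -𝔥`. -/
def Edge (h : Set (EV n)) (u w : R.Weyl) : Prop :=
  ∃ α ∈ R.pos, (w : EV n ≃ₗᵢ[ℝ] EV n) = sRefl α * (u : EV n ≃ₗᵢ[ℝ] EV n) ∧
    R.ap w⁻¹ α ∈ -h

/-- The flow-up (reachability) order of the Hessenberg graph. -/
def flowLe (h : Set (EV n)) (x y : R.Weyl) : Prop :=
  Relation.ReflTransGen (R.Edge h) x y

/-- The strict flow-up order. -/
def flowLt (h : Set (EV n)) (x y : R.Weyl) : Prop :=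
  Relation.TransGen (R.Edge h) x y

/-- The linear polynomial in `ℝ[Δ] = ℝ[x₁,…,xₙ]` corresponding to a vector. -/
def lin (α : EV n) : MvPolynomial (Fin n) ℝ :=
  ∑ i, MvPolynomial.C (α i) * MvPolynomial.X i

/-- The action of an isometry `w` on the polynomial ring, induced by the
linear action on the ambient space: it sends `lin α` to `lin (w α)`. -/
def polyAct (w : EV n ≃ₗᵢ[ℝ] EV n) :
    MvPolynomial (Fin n) ℝ →ₐ[ℝ] MvPolynomial (Fin n) ℝ :=
  MvPolynomial.aeval fun i => lin (w (EuclideanSpace.single i 1))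

/-- The dot action of the Weyl group on `Maps(W, ℝ[Δ])`:
`(w · P)(u) = w (P (w⁻¹ u))`. -/
def dot (w : R.Weyl) (P : R.Weyl → MvPolynomial (Fin n) ℝ) :
    R.Weyl → MvPolynomial (Fin n) ℝ :=
  fun u => polyAct (w : EV n ≃ₗᵢ[ℝ] EV n) (P (w⁻¹ * u))

/-- Membership in the GKM ring `H_T^*(𝔥)`: the GKM conditions
`P(w) - P(s_α w) ∈ ⟨α⟩` along all edges of `Γ_𝔥`. -/
def GKM (h : Set (EV n)) (P : R.Weyl → MvPolynomial (Fin n) ℝ) : Prop :=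
  ∀ u w : R.Weyl, ∀ α ∈ R.pos,
    (w : EV n ≃ₗᵢ[ℝ] EV n) = sRefl α * (u : EV n ≃ₗᵢ[ℝ] EV n) →
    R.ap w⁻¹ α ∈ -h → P w - P u ∈ Ideal.span {lin α}

/-- The product `∏_{α ∈ S} α` (over `S ∩ Φ`) as an element of `ℝ[Δ]`. -/
def prodRoots (S : Set (EV n)) : MvPolynomial (Fin n) ℝ :=
  ∏ α ∈ (R.finite.inter_of_right S).toFinset, lin α

/-- A flow-up class at `x`: homogeneous of degree `ℓ_𝔥(x)`, with
`P(x) = ∏_{α ∈ N_x^𝔥} α`, supported on the flow-up of `x`, and satisfying the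
GKM conditions. -/
def IsFlowUp (h : Set (EV n)) (x : R.Weyl)
    (P : R.Weyl → MvPolynomial (Fin n) ℝ) : Prop :=
  R.GKM h P ∧ (∀ y, (P y).IsHomogeneous (R.lenh h x)) ∧
    P x = R.prodRoots (R.Nh h x) ∧ ∀ y, P y ≠ 0 → R.flowLe h x y

/-- Irreducibility: the roots admit no splitting into two nonempty mutually
orthogonal parts. -/
def IsIrreducible : Prop :=
  ∀ Ψ Ψ' : Set (EV n), Ψ ∪ Ψ' = R.Φ → (∀ a ∈ Ψ, ∀ b ∈ Ψ', ⟪a, b⟫ = 0) →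
    Ψ = ∅ ∨ Ψ' = ∅

/-- `γ` is the highest root: `α ⪯ γ` for every root `α`. -/
def IsHighest (γ : EV n) : Prop :=
  γ ∈ R.pos ∧ ∀ α ∈ R.Φ, α = γ ∨ R.prec α γ

end BasedRootSystem

/-!
Translating an edge `u → s_α u` of `Γ_𝔥` by `w⁻¹` gives the pair `w⁻¹u`, `s_β w⁻¹u` with
`β = w⁻¹α` again a root, and the Hessenberg condition is untouched because
`(w⁻¹ s_α u)⁻¹ β = (s_α u)⁻¹ α`. If `β` is negative, the pair is the edge for `-β` traversed
backwards, so `P` satisfies the GKM condition for `β` on it in either case; applying `w` then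
carries `⟨β⟩` into `⟨w β⟩ = ⟨α⟩`.
-/

namespace BasedRootSystem

variable {n : ℕ}

lemma sRefl_inv (v : EV n) : (sRefl v)⁻¹ = sRefl v :=
  Submodule.reflection_inv

lemma sRefl_mul_self (v : EV n) : sRefl v * sRefl v = 1 :=
  Submodule.reflection_mul_reflection _

lemma sRefl_apply_self (v : EV n) : sRefl v v = -v :=
  Submodule.reflection_orthogonalComplement_singleton_eq_neg v

lemma sRefl_neg (v : EV n) : sRefl (-v) = sRefl v := by
  have : ℝ ∙ (-v) = ℝ ∙ v := by
    rw [← Set.neg_singleton, Submodule.span_neg]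
  simp only [sRefl, this]

lemma sRefl_map (g : EV n ≃ₗᵢ[ℝ] EV n) (v : EV n) :
    sRefl (g v) = g * sRefl v * g⁻¹ := by
  have : (ℝ ∙ g v)ᗮ = ((ℝ ∙ v)ᗮ).map (g.toLinearEquiv : EV n →ₗ[ℝ] EV n) := by
    rw [Submodule.map_orthogonal_equiv, Submodule.map_span, Set.image_singleton]
    rfl
  ext x
  simp only [sRefl, this, Submodule.reflection_map_apply]
  rfl

def linMap : EV n →ₗ[ℝ] MvPolynomial (Fin n) ℝ where
  toFun := lin
  map_add' a b := by simp only [lin, PiLp.add_apply, map_add, add_mul, Finset.sum_add_distrib]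
  map_smul' c a := by
    simp only [lin, PiLp.smul_apply, smul_eq_mul, map_mul, RingHom.id_apply, Finset.smul_sum,
      MvPolynomial.smul_eq_C_mul, mul_assoc]

lemma lin_neg (a : EV n) : lin (-a) = -lin a :=
  linMap.map_neg a

lemma lin_single (i : Fin n) : lin (EuclideanSpace.single i 1) = MvPolynomial.X i := by
  simp [lin]

lemma polyAct_lin (g : EV n ≃ₗᵢ[ℝ] EV n) (v : EV n) : polyAct g (lin v) = lin (g v) := by
  have : (polyAct g).toLinearMap ∘ₗ linMap = linMap ∘ₗ (g.toLinearEquiv : EV n →ₗ[ℝ] EV n) :=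
    (EuclideanSpace.basisFun (Fin n) ℝ).toBasis.ext fun i => by
      simp [linMap, lin_single, polyAct]
  exact LinearMap.congr_fun this v

lemma polyAct_mem_span_lin (g : EV n ≃ₗᵢ[ℝ] EV n) {β : EV n} {p : MvPolynomial (Fin n) ℝ}
    (hp : p ∈ Ideal.span {lin β}) : polyAct g p ∈ Ideal.span {lin (g β)} := by
  simpa [Ideal.map_span, polyAct_lin] using Ideal.mem_map_of_mem (polyAct g) hp

lemma ap_mem_Φ (R : BasedRootSystem n) (w : R.Weyl) {x : EV n} (hx : x ∈ R.Φ) :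
    R.ap w x ∈ R.Φ := by
  obtain ⟨g, hg⟩ := w
  change g x ∈ R.Φ
  induction hg using Subgroup.closure_induction'' generalizing x with
  | mem _ hs => obtain ⟨α, hα, rfl⟩ := hs; exact R.reflect_mem α hα x hx
  | inv_mem _ hs => obtain ⟨α, hα, rfl⟩ := hs; rw [sRefl_inv]; exact R.reflect_mem α hα x hx
  | one => exact hx
  | mul a b _ _ iha ihb => exact iha (ihb hx)

variable {R : BasedRootSystem n}

lemma ap_mul (a b : R.Weyl) (x : EV n) : R.ap (a * b) x = R.ap a (R.ap b x) := rfl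

lemma ap_inv (a : R.Weyl) (x : EV n) : R.ap a⁻¹ x = (a : EV n ≃ₗᵢ[ℝ] EV n)⁻¹ x := rfl

lemma coe_mul_of_eq_sRefl_mul {u w : R.Weyl} {α : EV n}
    (hw : (w : EV n ≃ₗᵢ[ℝ] EV n) = sRefl α * u) (v : R.Weyl) :
    ((v * w : R.Weyl) : EV n ≃ₗᵢ[ℝ] EV n) = sRefl (R.ap v α) * (v * u : R.Weyl) := by
  simp only [Subgroup.coe_mul, ap, sRefl_map, hw]
  group

lemma GKM.sub_mem_span_of_mem_Φ {h : Set (EV n)} {P : R.Weyl → MvPolynomial (Fin n) ℝ}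
    (hP : R.GKM h P) {u w : R.Weyl} {β : EV n} (hβ : β ∈ R.Φ)
    (hw : (w : EV n ≃ₗᵢ[ℝ] EV n) = sRefl β * u) (hβh : R.ap w⁻¹ β ∈ -h) :
    P w - P u ∈ Ideal.span {lin β} := by
  rcases R.pos_union ▸ hβ with hpos | hneg
  · exact hP u w β hpos hw hβh
  · have hu : (u : EV n ≃ₗᵢ[ℝ] EV n) = sRefl (-β) * w := by
      rw [sRefl_neg, hw, ← mul_assoc, sRefl_mul_self, one_mul]
    have hβh' : R.ap u⁻¹ (-β) ∈ -h := by
      rwa [ap_inv, hu, mul_inv_rev, LinearIsometryEquiv.coe_mul, Function.comp_apply, sRefl_inv,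
        sRefl_neg, map_neg, sRefl_apply_self, neg_neg, ← ap_inv]
    have := hP w u (-β) hneg hu hβh'
    rwa [lin_neg, Ideal.span_singleton_neg, ← neg_sub, neg_mem_iff] at this

end BasedRootSystem

open BasedRootSystem in
theorem gkm_dot_stable_general {n : ℕ} (R : BasedRootSystem n) (h : Set (EV n))
    (w : R.Weyl) (P : R.Weyl → MvPolynomial (Fin n) ℝ)
    (hP : R.GKM h P) : R.GKM h (R.dot w P) := by
  intro u' w' α hα hw' hαh
  have hβ : R.ap w⁻¹ α ∈ R.Φ := R.ap_mem_Φ w⁻¹ (R.pos_sub hα)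
  have hβh : R.ap (w⁻¹ * w')⁻¹ (R.ap w⁻¹ α) ∈ -h := by
    rwa [← ap_mul, mul_inv_rev, inv_mul_cancel_right]
  have hedge := hP.sub_mem_span_of_mem_Φ hβ (coe_mul_of_eq_sRefl_mul hw' w⁻¹) hβh
  have hα' : (w : EV n ≃ₗᵢ[ℝ] EV n) (R.ap w⁻¹ α) = α := by
    rw [ap_inv, LinearIsometryEquiv.coe_inv, LinearIsometryEquiv.apply_symm_apply]
  simpa only [dot, map_sub, hα'] using polyAct_mem_span_lin w hedge

open BasedRootSystem in
/-- The GKM ring `H_T^*(𝔥)` is stable under the dot action of the Weyl group. -/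
theorem gkm_dot_stable {n : ℕ} (R : BasedRootSystem n) (h : Set (EV n))
    (hh : R.IsHess h) (w : R.Weyl) (P : R.Weyl → MvPolynomial (Fin n) ℝ)
    (hP : R.GKM h P) : R.GKM h (R.dot w P) :=
  gkm_dot_stable_general R h w P hP
end
end

section
/- Let Φ be a crystallographic root system with Hessenberg set 𝔥, and suppose v = s_α w covers w in Bruhat order where α = α_i ∈ Δ is a simple root. If α ∈ N_v^𝔥, then N_v^𝔥 = {α} ∪ s_α N_w^𝔥; if α ∉ N_v^𝔥, then N_v^𝔥 = s_α N_w^𝔥. -/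
/-!
Since `v⁻¹ = w⁻¹ s_α` and the simple reflection `s_α` permutes `Φ⁺ \ {α}`, the map `μ ↦ s_α μ`
carries `N_v^𝔥 \ {α}` onto `N_w^𝔥 \ {α}`, for any `𝔥`. Taking `𝔥 = Φ⁺` shows that `α ∈ N_w` would
force `ℓ(v) = ℓ(w) - 1`; so `α ∉ N_w ⊇ N_w^𝔥`, and `N_v^𝔥 \ {α} = s_α N_w^𝔥`.
-/

open scoped RealInnerProductSpace Pointwise

noncomputable section

lemma sRefl_apply {n : ℕ} (α x : EV n) :
    sRefl α x = x - (2 * (⟪α, x⟫ / ‖α‖ ^ 2)) • α := by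
  rw [sRefl, Submodule.reflection_orthogonal_apply, Submodule.reflection_singleton_apply]
  simp only [RCLike.ofReal_real_eq_id, id_eq]
  module

lemma sRefl_apply_self {n : ℕ} (α : EV n) : sRefl α α = -α :=
  Submodule.reflection_orthogonalComplement_singleton_eq_neg α

lemma sRefl_sRefl {n : ℕ} (α x : EV n) : sRefl α (sRefl α x) = x :=
  Submodule.reflection_reflection _ x

namespace BasedRootSystem

variable {n : ℕ} (R : BasedRootSystem n)

lemma notMem_neg_pos {x : EV n} (hx : x ∈ R.pos) : x ∉ -R.pos := fun hx' =>
  Set.eq_empty_iff_forall_notMem.mp R.pos_disj x ⟨hx, hx'⟩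

def simpleBasis : Module.Basis R.Δ ℝ (EV n) :=
  Module.Basis.mk R.Δ_indep (by rw [Subtype.range_coe, R.Δ_span])

lemma simpleBasis_apply (δ : R.Δ) : R.simpleBasis δ = δ := by
  rw [simpleBasis, Module.Basis.mk_apply]

lemma simpleBasis_repr_simple {α : EV n} (hα : α ∈ R.Δ) :
    R.simpleBasis.repr α = Finsupp.single ⟨α, hα⟩ 1 := by
  rw [← R.simpleBasis.repr_self, R.simpleBasis_apply]

lemma simpleBasis_repr_nonneg {x : EV n} (hx : x ∈ AddSubmonoid.closure R.Δ) (δ : R.Δ) :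
    0 ≤ R.simpleBasis.repr x δ := by
  induction hx using AddSubmonoid.closure_induction with
  | mem y hy =>
    rw [R.simpleBasis_repr_simple hy, Finsupp.single_apply]
    split_ifs <;> norm_num
  | zero => simp
  | add a b _ _ iha ihb =>
    rw [map_add, Finsupp.add_apply]
    exact add_nonneg iha ihb

/-- Off `α`, the simple coordinates of `x` and `y` are nonnegative and sum to zero. -/
lemma exists_eq_smul_of_add_eq_smul {x y α : EV n} (hx : x ∈ AddSubmonoid.closure R.Δ)
    (hy : y ∈ AddSubmonoid.closure R.Δ) (hα : α ∈ R.Δ) {c : ℝ} (hxy : x + y = c • α) :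
    ∃ k : ℝ, x = k • α := by
  refine ⟨R.simpleBasis.repr x ⟨α, hα⟩, R.simpleBasis.repr.injective ?_⟩
  ext δ
  rw [map_smul, R.simpleBasis_repr_simple hα, Finsupp.smul_apply, Finsupp.single_apply,
    smul_eq_mul]
  split_ifs with hδ
  · rw [hδ, mul_one]
  · have hsum := congrArg (fun z => R.simpleBasis.repr z δ) hxy
    simp only [map_add, map_smul, Finsupp.add_apply, Finsupp.smul_apply,
      R.simpleBasis_repr_simple hα, Finsupp.single_apply, if_neg hδ, smul_eq_mul, mul_zero] at hsum
    linarith [R.simpleBasis_repr_nonneg hx δ, R.simpleBasis_repr_nonneg hy δ]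

/-- Otherwise `β` and `-s_α β` would be positive roots summing to a multiple of `α`,
forcing `β = ±α`. -/
lemma sRefl_mem_pos {α β : EV n} (hα : α ∈ R.Δ) (hβ : β ∈ R.pos) (hβα : β ≠ α) :
    sRefl α β ∈ R.pos := by
  have hαΦ : α ∈ R.Φ := R.pos_sub (R.Δ_sub hα)
  have hsβ : sRefl α β ∈ R.pos ∪ -R.pos := R.pos_union ▸ R.reflect_mem α hαΦ β (R.pos_sub hβ)
  refine hsβ.resolve_right fun hneg => ?_
  obtain ⟨k, rfl⟩ := R.exists_eq_smul_of_add_eq_smul (R.pos_combo β hβ)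
    (R.pos_combo _ (Set.mem_neg.mp hneg)) hα (by rw [sRefl_apply]; abel)
  rcases R.reduced α hαΦ k (R.pos_sub hβ) with rfl | rfl
  · exact hβα (one_smul ℝ α)
  · exact R.notMem_neg_pos hβ (by simpa using R.Δ_sub hα)

lemma ap_inv_of_eq_sRefl_mul {v w : R.Weyl} {α : EV n}
    (hv : (v : EV n ≃ₗᵢ[ℝ] EV n) = sRefl α * (w : EV n ≃ₗᵢ[ℝ] EV n)) (x : EV n) :
    R.ap v⁻¹ x = R.ap w⁻¹ (sRefl α x) := by
  have hs : (sRefl α)⁻¹ = sRefl α := Submodule.reflection_inv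
  change ((v : EV n ≃ₗᵢ[ℝ] EV n)⁻¹) x = ((w : EV n ≃ₗᵢ[ℝ] EV n)⁻¹) (sRefl α x)
  rw [hv, mul_inv_rev, hs, LinearIsometryEquiv.coe_mul, Function.comp_apply]

lemma Nh_subset_N {h : Set (EV n)} (hh : h ⊆ R.pos) (w : R.Weyl) : R.Nh h w ⊆ R.N w :=
  fun _ hμ => ⟨hμ.1, Set.neg_subset_neg.mpr hh hμ.2⟩

lemma Nh_sdiff_singleton_of_eq_sRefl_mul (h : Set (EV n)) {v w : R.Weyl} {α : EV n}
    (hα : α ∈ R.Δ) (hv : (v : EV n ≃ₗᵢ[ℝ] EV n) = sRefl α * (w : EV n ≃ₗᵢ[ℝ] EV n)) :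
    R.Nh h v \ {α} = sRefl α '' (R.Nh h w \ {α}) := by
  have hne : ∀ μ ∈ R.pos, sRefl α μ ≠ α := fun μ hμ hμα => by
    have : μ = -α := by rw [← sRefl_sRefl α μ, hμα, sRefl_apply_self]
    exact R.notMem_neg_pos hμ (by simpa [this] using R.Δ_sub hα)
  ext μ
  constructor
  · rintro ⟨⟨hμ, hμh⟩, hμα⟩
    refine ⟨sRefl α μ, ⟨⟨R.sRefl_mem_pos hα hμ hμα, ?_⟩, hne μ hμ⟩, sRefl_sRefl α μ⟩
    rwa [← R.ap_inv_of_eq_sRefl_mul hv]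
  · rintro ⟨β, ⟨⟨hβ, hβh⟩, hβα⟩, rfl⟩
    refine ⟨⟨R.sRefl_mem_pos hα hβ hβα, ?_⟩, hne β hβ⟩
    rwa [R.ap_inv_of_eq_sRefl_mul hv, sRefl_sRefl]

lemma len_add_one_of_mem_N {v w : R.Weyl} {α : EV n} (hα : α ∈ R.Δ)
    (hv : (v : EV n ≃ₗᵢ[ℝ] EV n) = sRefl α * (w : EV n ≃ₗᵢ[ℝ] EV n)) (hαw : α ∈ R.N w) :
    R.len v + 1 = R.len w := by
  have hαv : α ∉ R.N v := fun hαv => by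
    refine R.notMem_neg_pos ?_ hαv.2
    rw [R.ap_inv_of_eq_sRefl_mul hv, sRefl_apply_self, ap, map_neg]
    exact Set.mem_neg.mp hαw.2
  have hfin : (R.N w).Finite := R.finite.subset fun _ hμ => R.pos_sub hμ.1
  have hNv : R.N v \ {α} = sRefl α '' (R.N w \ {α}) :=
    R.Nh_sdiff_singleton_of_eq_sRefl_mul R.pos hα hv
  rw [Set.sdiff_singleton_eq_self hαv] at hNv
  rw [len, len, ← Set.ncard_sdiff_singleton_add_one hαw hfin]
  exact congrArg (· + 1) (hNv ▸ Set.ncard_image_of_injective _ (sRefl α).injective)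

end BasedRootSystem

open BasedRootSystem in
/-- If `v = s_α w` covers `w` with `α` a simple root, then
`N_v^𝔥 = {α} ∪ s_α N_w^𝔥` when `α ∈ N_v^𝔥`, and `N_v^𝔥 = s_α N_w^𝔥` otherwise. -/
theorem hinv_cover_simple {n : ℕ} (R : BasedRootSystem n) (h : Set (EV n))
    (hh : R.IsHess h) (v w : R.Weyl) (α : EV n) (hα : α ∈ R.Δ)
    (hv : (v : EV n ≃ₗᵢ[ℝ] EV n) = sRefl α * (w : EV n ≃ₗᵢ[ℝ] EV n))
    (hlen : R.len v = R.len w + 1) :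
    (α ∈ R.Nh h v → R.Nh h v = {α} ∪ ⇑(sRefl α) '' R.Nh h w) ∧
    (α ∉ R.Nh h v → R.Nh h v = ⇑(sRefl α) '' R.Nh h w) := by
  have hαw : α ∉ R.Nh h w := fun hαw => by
    have := R.len_add_one_of_mem_N hα hv (R.Nh_subset_N hh.1 w hαw)
    omega
  have hsdiff : R.Nh h v \ {α} = sRefl α '' R.Nh h w := by
    rw [R.Nh_sdiff_singleton_of_eq_sRefl_mul h hα hv, Set.sdiff_singleton_eq_self hαw]
  refine ⟨fun hαv => ?_, fun hαv => ?_⟩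
  · rw [← hsdiff, Set.singleton_union, Set.insert_sdiff_self_of_mem hαv]
  · rw [← hsdiff, Set.sdiff_singleton_eq_self hαv]
end
end

section
/- Let Φ be an irreducible crystallographic root system with highest root γ and 𝔥_γ = Φ⁺ \ {γ}. For w ∈ W write ℓ_γ(w) = |N_w^{γ}| where N_w^{γ} = {α ∈ Φ⁺ : w⁻¹α ∈ −𝔥_γ}. Suppose v > w in Bruhat order. Then ℓ_γ(w) = ℓ_γ(v) if and only if: v covers w, N_w = N_w^{γ}, and there exists β ∈ N_v with v⁻¹β = −γ. -/
/-! Since `N_u^γ = N_u \ {u(-γ)}`, `ℓ_γ(u)` is `ℓ(u)` or `ℓ(u) - 1` according as `u(-γ) ∈ N_u`.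
As `ℓ(w) < ℓ(v)`, the two `ℓ_γ` agree exactly when `ℓ(v) = ℓ(w) + 1`, `v(-γ) ∈ N_v` and
`w(-γ) ∉ N_w`; these are the three conditions, the first being the covering relation. -/

open scoped RealInnerProductSpace Pointwise

noncomputable section

namespace BasedRootSystem

variable {n : ℕ} (R : BasedRootSystem n)

lemma ap_inv_eq_iff (u : R.Weyl) (x y : EV n) : R.ap u⁻¹ x = y ↔ x = R.ap u y := by
  simp only [ap, InvMemClass.coe_inv, LinearIsometryEquiv.coe_inv,
    LinearIsometryEquiv.symm_apply_eq]

lemma exists_mem_N_ap_inv_eq_iff (u : R.Weyl) (x : EV n) :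
    (∃ β ∈ R.N u, R.ap u⁻¹ β = x) ↔ R.ap u x ∈ R.N u := by
  simp only [ap_inv_eq_iff, exists_eq_right]

lemma N_finite (u : R.Weyl) : (R.N u).Finite :=
  R.finite.subset fun _ hα => R.pos_sub hα.1

lemma Nh_pos_diff_singleton (γ : EV n) (u : R.Weyl) :
    R.Nh (R.pos \ {γ}) u = R.N u \ {R.ap u (-γ)} := by
  ext α
  simp only [Nh, N, Set.mem_ofPred_eq, Set.mem_sdiff, Set.mem_neg, Set.mem_singleton_iff,
    neg_eq_iff_eq_neg, ← ap_inv_eq_iff, and_assoc]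

lemma N_eq_Nh_pos_diff_singleton_iff (γ : EV n) (u : R.Weyl) :
    R.N u = R.Nh (R.pos \ {γ}) u ↔ R.ap u (-γ) ∉ R.N u := by
  rw [Nh_pos_diff_singleton, eq_comm, sdiff_eq_left, Set.disjoint_singleton_right]

lemma lenh_pos_diff_singleton_cases (γ : EV n) (u : R.Weyl) :
    R.ap u (-γ) ∈ R.N u ∧ R.lenh (R.pos \ {γ}) u + 1 = R.len u ∨
      R.ap u (-γ) ∉ R.N u ∧ R.lenh (R.pos \ {γ}) u = R.len u := by
  rw [lenh, len, Nh_pos_diff_singleton]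
  by_cases h : R.ap u (-γ) ∈ R.N u
  · exact Or.inl ⟨h, Set.ncard_sdiff_singleton_add_one h (R.N_finite u)⟩
  · exact Or.inr ⟨h, by rw [Set.sdiff_singleton_eq_self h]⟩

lemma len_lt_of_bruhatLt {w v : R.Weyl} (h : R.bruhatLt w v) : R.len w < R.len v := by
  induction h with
  | single h => exact h.choose_spec.2.2
  | tail _ h ih => exact ih.trans h.choose_spec.2.2

lemma covers_iff_of_bruhatLt {w v : R.Weyl} (h : R.bruhatLt w v) :
    R.Covers v w ↔ R.len v = R.len w + 1 := by
  refine ⟨fun ⟨_, _, _, hlen⟩ => hlen, fun hlen => ?_⟩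
  cases h with
  | single h =>
    obtain ⟨α, hα, hv, _⟩ := h
    exact ⟨α, hα, hv, hlen⟩
  | tail h' hstep =>
    have := R.len_lt_of_bruhatLt h'
    have := hstep.choose_spec.2.2
    omega

end BasedRootSystem

open BasedRootSystem in
theorem lenh_eq_iff_cover_general {n : ℕ} (R : BasedRootSystem n) (γ : EV n)
    (v w : R.Weyl) (hlt : R.bruhatLt w v) :
    R.lenh (R.pos \ {γ}) w = R.lenh (R.pos \ {γ}) v ↔
      (R.Covers v w ∧ R.N w = R.Nh (R.pos \ {γ}) w ∧
        ∃ β ∈ R.N v, R.ap v⁻¹ β = -γ) := by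
  rw [R.covers_iff_of_bruhatLt hlt, N_eq_Nh_pos_diff_singleton_iff,
    exists_mem_N_ap_inv_eq_iff]
  have hlen := R.len_lt_of_bruhatLt hlt
  rcases R.lenh_pos_diff_singleton_cases γ w with ⟨hw, hw'⟩ | ⟨hw, hw'⟩ <;>
    rcases R.lenh_pos_diff_singleton_cases γ v with ⟨hv, hv'⟩ | ⟨hv, hv'⟩ <;>
    simp only [hw, hv, not_true_eq_false, not_false_eq_true, and_true, and_false, and_self,
      iff_false, ne_eq] <;>
    omega

open BasedRootSystem in
/-- For the highest root Hessenberg set `𝔥_γ = Φ⁺ \ {γ}` and `v > w` in Bruhat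
order: `ℓ_γ(w) = ℓ_γ(v)` iff `v` covers `w`, `N_w = N_w^γ`, and there is
`β ∈ N_v` with `v⁻¹β = -γ`. -/
theorem lenh_eq_iff_cover {n : ℕ} (R : BasedRootSystem n)
    (hirr : R.IsIrreducible) (γ : EV n) (hγ : R.IsHighest γ)
    (v w : R.Weyl) (hlt : R.bruhatLt w v) :
    R.lenh (R.pos \ {γ}) w = R.lenh (R.pos \ {γ}) v ↔
      (R.Covers v w ∧ R.N w = R.Nh (R.pos \ {γ}) w ∧
        ∃ β ∈ R.N v, R.ap v⁻¹ β = -γ) :=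
  lenh_eq_iff_cover_general R γ v w hlt
end
end
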